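/- Let D be an n×d real matrix with n ≥ d, and let D = LΣRᵀ be a singular value decomposition where L ∈ ℝ^{n×d} has orthonormal columns, R ∈ ℝ^{d×d} is orthogonal, and Σ is diagonal with nonnegative entries. Then Y = LRᵀ minimizes ‖Y - D‖_F² over all n×d matrices Y with YᵀY = I_d. -/
import Mathlib


open Matrix

/-- Orthogonal Procrustes problem: if `D = L Σ Rᵀ` is an SVD (with `L` having
orthonormal columns, `R` orthogonal, `Σ = diagonal σ` with `σ ≥ 0`), then
`Y = L Rᵀ` minimizes `‖Y - D‖_F²` subject to `YᵀY = I`. -/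
theorem orthogonal_procrustes
    (n d : ℕ) (hnd : d ≤ n)
    (D L : Matrix (Fin n) (Fin d) ℝ) (R : Matrix (Fin d) (Fin d) ℝ)
    (σ : Fin d → ℝ)
    (hL : Lᵀ * L = 1) (hR1 : Rᵀ * R = 1) (hR2 : R * Rᵀ = 1)
    (hσ : ∀ i, 0 ≤ σ i)
    (hD : D = L * Matrix.diagonal σ * Rᵀ) :
    ∀ Y : Matrix (Fin n) (Fin d) ℝ, Yᵀ * Y = 1 →
      ((L * Rᵀ - D)ᵀ * (L * Rᵀ - D)).trace ≤ ((Y - D)ᵀ * (Y - D)).trace := by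
  intro Y hY
  -- expansion of the objective
  have expand : ∀ X : Matrix (Fin n) (Fin d) ℝ, Xᵀ * X = 1 →
      ((X - D)ᵀ * (X - D)).trace
        = (d : ℝ) - 2 * (Xᵀ * D).trace + (Dᵀ * D).trace := by
    intro X hX
    have h1 : (X - D)ᵀ * (X - D)
        = Xᵀ * X - Xᵀ * D - Dᵀ * X + Dᵀ * D := by
      rw [transpose_sub, Matrix.sub_mul, Matrix.mul_sub, Matrix.mul_sub]
      abel
    rw [h1, hX]
    have h2 : (Dᵀ * X).trace = (Xᵀ * D).trace := by
      rw [← Matrix.trace_transpose (Dᵀ * X), transpose_mul, transpose_transpose]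
    simp [Matrix.trace_add, Matrix.trace_sub, h2, Matrix.trace_one]
    ring
  -- upper bound on trace (Wᵀ D) for any W with orthonormal columns
  have key : ∀ W : Matrix (Fin n) (Fin d) ℝ, Wᵀ * W = 1 →
      (Wᵀ * D).trace ≤ ∑ i, σ i := by
    intro W hW
    have hZ : ∀ i : Fin d, ((W * R)ᵀ * L) i i ≤ 1 := by
      intro i
      have hcs := Finset.sum_mul_sq_le_sq_mul_sq Finset.univ
        (fun k => (W * R) k i) (fun k => L k i)
      have h1 : ∑ k, ((W * R) k i) ^ 2 = 1 := by
        have e : ((W * R)ᵀ * (W * R)) i i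
            = (1 : Matrix (Fin d) (Fin d) ℝ) i i := by
          rw [transpose_mul, Matrix.mul_assoc, ← Matrix.mul_assoc Wᵀ, hW,
            Matrix.one_mul, hR1]
        simpa [Matrix.mul_apply, sq, mul_comm] using e
      have h2 : ∑ k, (L k i) ^ 2 = 1 := by
        have e : (Lᵀ * L) i i = (1 : Matrix (Fin d) (Fin d) ℝ) i i := by rw [hL]
        simpa [Matrix.mul_apply, sq] using e
      have h3 : ((W * R)ᵀ * L) i i = ∑ k, (W * R) k i * L k i := by
        simp [Matrix.mul_apply, mul_comm]
      rw [h3]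
      nlinarith [hcs, h1, h2]
    -- trace (Wᵀ D) = ∑ i, ((W R)ᵀ L) i i * σ i
    have htr : (Wᵀ * D).trace = ∑ i, ((W * R)ᵀ * L) i i * σ i := by
      rw [hD]
      have : Wᵀ * (L * Matrix.diagonal σ * Rᵀ)
          = (Wᵀ * L * Matrix.diagonal σ) * Rᵀ := by
        simp [Matrix.mul_assoc]
      rw [this, Matrix.trace_mul_comm]
      have : Rᵀ * (Wᵀ * L * Matrix.diagonal σ)
          = ((W * R)ᵀ * L) * Matrix.diagonal σ := by
        simp [transpose_mul, Matrix.mul_assoc]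
      rw [this]
      simp [Matrix.trace, Matrix.diag, Matrix.mul_diagonal]
    rw [htr]
    apply Finset.sum_le_sum
    intro i _
    calc ((W * R)ᵀ * L) i i * σ i ≤ 1 * σ i :=
          mul_le_mul_of_nonneg_right (hZ i) (hσ i)
      _ = σ i := one_mul _
  -- the candidate attains the bound
  have hopt : ((L * Rᵀ)ᵀ * D).trace = ∑ i, σ i := by
    rw [hD]
    have : (L * Rᵀ)ᵀ * (L * Matrix.diagonal σ * Rᵀ)
        = R * Matrix.diagonal σ * Rᵀ := by
      rw [transpose_mul, transpose_transpose]
      calc R * Lᵀ * (L * Matrix.diagonal σ * Rᵀ)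
          = R * (Lᵀ * L) * (Matrix.diagonal σ * Rᵀ) := by
            simp [Matrix.mul_assoc]
        _ = R * Matrix.diagonal σ * Rᵀ := by
            rw [hL, Matrix.mul_one, Matrix.mul_assoc]
    rw [this, Matrix.trace_mul_cycle, hR1, Matrix.one_mul]
    simp [Matrix.trace, Matrix.diag]
  have hLR : (L * Rᵀ)ᵀ * (L * Rᵀ) = 1 := by
    rw [transpose_mul, transpose_transpose]
    calc R * Lᵀ * (L * Rᵀ) = R * (Lᵀ * L) * Rᵀ := by simp [Matrix.mul_assoc]
      _ = 1 := by rw [hL, Matrix.mul_one, hR2]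
  rw [expand Y hY, expand (L * Rᵀ) hLR, hopt]
  have := key Y hY
  linarith
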